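/- Let X be a separable real Banach space, let n ≥ 1, A > 1, and let q : X → ℝ be a continuous 2n-homogeneous polynomial with ‖x‖^{2n} ≤ q(x) ≤ A‖x‖^{2n} for all x; set Q(x) = (q(x)+1)^{1/(2n)} − 1, let Lip(Q) denote a Lipschitz constant of Q, and for x ∈ X, ρ > 0 let D_Q(x,ρ) = {y ∈ X : Q(y−x) < ρ}. Let {x_m}_{m≥1} be a dense sequence in X. Then there exists a constant L₁ ≥ 1 (independent of ε below) such that for every r > 0 and every ε ∈ (0,1) there is a sequence of real-analytic, continuously Fréchet differentiable functions φ_m : X → ℝ with: (1) every φ_m is Lipschitz with constant L₁·Lip(Q)/r; (2) 0 ≤ φ_m(x) ≤ 1+ε for all x ∈ X and all m; (3) for every x ∈ X there exists m with φ_m(x) > 1/2; (4) 0 ≤ φ_m(x) ≤ ε for every x ∈ X \ D_Q(x_m, 5r); (4′) ‖φ_m′(x)‖ ≤ ε for every x ∈ X \ D_Q(x_m, 5r). -/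

import Mathlib

def IsRealAnalytic {X : Type*} [NormedAddCommGroup X] [NormedSpace ℝ X] (g : X → ℝ) : Prop :=
  ∀ x : X, ∃ N ∈ nhds x,
    ∃ P : ∀ k : ℕ, ContinuousMultilinearMap ℝ (fun _ : Fin k => X) ℝ,
      ∀ h : X, x + h ∈ N → HasSum (fun k => (P k) (fun _ => h)) (g (x + h))

/-!
Take `φ m x = θ (Q (x - xs m) / r)` with `θ t = log (1 + exp (k * (1 - t))) / k`, a softplus
smoothing of `max (1 - t) 0`. Softplus is monotone and `1`-Lipschitz, lies between `y` and
`y + exp (-y)`, is at most `exp y`, and has slope at most `exp c` on `(-∞, c]`; hence `θ` is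
`1`-Lipschitz, exceeds `1 - t`, is at most `1 + exp (-k)` on `[0, ∞)`, and both `θ` and its
slope are at most `exp (-k)` beyond `t = 4`, which a large `k` makes smaller than `ε`.
Analyticity comes from that of `log`, `exp` and `Q = exp (log (q + 1) / (2n)) - 1`, and some
`φ m x` exceeds `1/2` because `Q` is continuous with `Q 0 = 0` and `(xs m)` is dense.
-/

open Real Filter Topology

lemma AnalyticOnNhd.isRealAnalytic {X : Type*} [NormedAddCommGroup X] [NormedSpace ℝ X]
    {g : X → ℝ} (hg : AnalyticOnNhd ℝ g Set.univ) : IsRealAnalytic g := by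
  intro x
  obtain ⟨p, r, hp⟩ := hg x (Set.mem_univ x)
  refine ⟨Metric.eball x r, Metric.eball_mem_nhds x hp.r_pos, p, fun h hh => hp.hasSum ?_⟩
  simpa [Metric.mem_eball, edist_eq_enorm_sub] using hh

lemma ContinuousMultilinearMap.analyticAt_diag {𝕜 E F ι : Type*} [NontriviallyNormedField 𝕜]
    [NormedAddCommGroup E] [NormedSpace 𝕜 E] [NormedAddCommGroup F] [NormedSpace 𝕜 F]
    [Fintype ι] (M : ContinuousMultilinearMap 𝕜 (fun _ : ι => E) F) (x : E) :
    AnalyticAt 𝕜 (fun y => M fun _ => y) x :=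
  M.analyticAt.comp ((ContinuousLinearMap.pi fun _ : ι => ContinuousLinearMap.id 𝕜 E).analyticAt x)

lemma AnalyticAt.rpow_const {E : Type*} [NormedAddCommGroup E] [NormedSpace ℝ E] {f : E → ℝ}
    {x : E} (hf : AnalyticAt ℝ f x) (hx : 0 < f x) (γ : ℝ) :
    AnalyticAt ℝ (fun z => f z ^ γ) x := by
  refine (((analyticAt_log hx).comp hf).mul (analyticAt_const (v := γ))).rexp'.congr ?_
  filter_upwards [hf.continuousAt.eventually (lt_mem_nhds hx)] with z hz
  rw [rpow_def_of_pos hz]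
  rfl

noncomputable def softplus (y : ℝ) : ℝ := log (1 + exp y)

lemma softplus_pos (y : ℝ) : 0 < softplus y :=
  log_pos (by linarith [exp_pos y])

lemma le_softplus (y : ℝ) : y ≤ softplus y :=
  (le_log_iff_exp_le (by positivity)).2 (by linarith)

lemma softplus_le_exp (y : ℝ) : softplus y ≤ exp y := by
  unfold softplus
  linarith [log_le_sub_one_of_pos (by positivity : 0 < 1 + exp y)]

lemma softplus_eq_add_softplus_neg (y : ℝ) : softplus y = y + softplus (-y) := by
  rw [softplus, softplus, ← log_exp y, ← log_mul (exp_pos y).ne' (by positivity), log_exp,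
    mul_add, mul_one, ← exp_add, add_neg_cancel, exp_zero, add_comm]

lemma softplus_monotone : Monotone softplus := fun a b hab =>
  log_le_log (by positivity) (by gcongr)

lemma softplus_sub_le_exp_sub_exp {a b : ℝ} (hab : a ≤ b) :
    softplus b - softplus a ≤ exp b - exp a := by
  have ha : 0 < 1 + exp a := by positivity
  rw [softplus, softplus, ← log_div (by positivity) ha.ne']
  refine (log_le_sub_one_of_pos (by positivity)).trans ?_
  rw [div_sub_one ha.ne', div_le_iff₀ ha]
  nlinarith [exp_pos a, exp_le_exp.2 hab]

lemma softplus_sub_le_sub {a b : ℝ} (hab : a ≤ b) : softplus b - softplus a ≤ b - a := by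
  rw [softplus_eq_add_softplus_neg b, softplus_eq_add_softplus_neg a]
  linarith [softplus_monotone (neg_le_neg hab)]

lemma abs_softplus_sub_le (a b : ℝ) : |softplus a - softplus b| ≤ |a - b| := by
  wlog hab : a ≤ b generalizing a b
  · rw [abs_sub_comm, abs_sub_comm a]; exact this b a (le_of_not_ge hab)
  rw [abs_sub_comm, abs_sub_comm a, abs_of_nonneg (sub_nonneg.2 (softplus_monotone hab)),
    abs_of_nonneg (sub_nonneg.2 hab)]
  exact softplus_sub_le_sub hab

lemma abs_softplus_sub_le_exp_mul {a b c : ℝ} (ha : a ≤ c) (hb : b ≤ c) :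
    |softplus a - softplus b| ≤ exp c * |a - b| := by
  wlog hab : a ≤ b generalizing a b
  · rw [abs_sub_comm, abs_sub_comm a]; exact this hb ha (le_of_not_ge hab)
  rw [abs_sub_comm, abs_sub_comm a, abs_of_nonneg (sub_nonneg.2 (softplus_monotone hab)),
    abs_of_nonneg (sub_nonneg.2 hab)]
  have hconv : exp b * (a - b + 1) ≤ exp a :=
    calc exp b * (a - b + 1) ≤ exp b * exp (a - b) := by gcongr; exact add_one_le_exp _
      _ = exp a := by rw [← exp_add]; ring_nf
  calc softplus b - softplus a ≤ exp b - exp a := softplus_sub_le_exp_sub_exp hab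
    _ ≤ exp b * (b - a) := by linarith
    _ ≤ exp c * (b - a) := by gcongr

lemma analyticAt_softplus (y : ℝ) : AnalyticAt ℝ softplus y :=
  (analyticAt_log (by positivity)).comp (analyticAt_const.add analyticAt_rexp)

lemma exists_analytic_profile {ε : ℝ} (hε : 0 < ε) (C : ℝ) :
    ∃ θ : ℝ → ℝ, (∀ t, AnalyticAt ℝ θ t) ∧ (∀ s t, |θ s - θ t| ≤ |s - t|) ∧
      (∀ t, 0 ≤ t → 0 ≤ θ t ∧ θ t ≤ 1 + ε) ∧ (∀ t, t < 1 / 2 → 1 / 2 < θ t) ∧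
      (∀ t, 5 ≤ t → θ t ≤ ε) ∧
      ∃ δ, 0 ≤ δ ∧ δ * C ≤ ε ∧ ∀ s t, 4 < s → 4 < t → |θ s - θ t| ≤ δ * |s - t| := by
  obtain ⟨k, hk1, hkε, hkC⟩ : ∃ k : ℝ, 1 ≤ k ∧ exp (-k) ≤ ε ∧ exp (-k) * C ≤ ε := by
    have hC : Tendsto (fun k => exp (-k) * C) atTop (𝓝 0) := by
      simpa using tendsto_exp_neg_atTop_nhds_zero.mul_const C
    exact ((eventually_ge_atTop 1).and ((tendsto_exp_neg_atTop_nhds_zero.eventually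
      (ge_mem_nhds hε)).and (hC.eventually (ge_mem_nhds hε)))).exists
  have hk : 0 < k := by linarith
  have hdiff : ∀ s t, |softplus (k * (1 - s)) / k - softplus (k * (1 - t)) / k| =
      |softplus (k * (1 - s)) - softplus (k * (1 - t))| / k := fun s t => by
    rw [← sub_div, abs_div, abs_of_pos hk]
  have hscale : ∀ s t, |k * (1 - s) - k * (1 - t)| = |s - t| * k := fun s t => by
    rw [← mul_sub, abs_mul, abs_of_pos hk, abs_sub_comm, mul_comm]; ring_nf
  refine ⟨fun t => softplus (k * (1 - t)) / k, fun t => ?_, fun s t => ?_,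
    fun t ht => ⟨div_nonneg (softplus_pos _).le hk.le, ?_⟩, fun t ht => ?_, fun t ht => ?_,
    exp (-k), (exp_pos _).le, hkC, fun s t hs ht => ?_⟩
  · exact ((analyticAt_softplus _).comp (analyticAt_const.mul
      (analyticAt_const.sub analyticAt_id))).div_const
  · rw [hdiff, div_le_iff₀ hk, ← hscale]
    exact abs_softplus_sub_le _ _
  · rw [div_le_iff₀ hk]
    calc softplus (k * (1 - t)) ≤ softplus k := softplus_monotone (by nlinarith)
      _ = k + softplus (-k) := softplus_eq_add_softplus_neg k
      _ ≤ k + exp (-k) := by gcongr; exact softplus_le_exp _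
      _ ≤ (1 + ε) * k := by nlinarith
  · rw [lt_div_iff₀ hk]
    nlinarith [le_softplus (k * (1 - t))]
  · rw [div_le_iff₀ hk]
    calc softplus (k * (1 - t)) ≤ exp (k * (1 - t)) := softplus_le_exp _
      _ ≤ exp (-k) := exp_le_exp.2 (by nlinarith)
      _ ≤ ε * k := by nlinarith
  · rw [hdiff, div_le_iff₀ hk, mul_assoc, ← hscale]
    exact abs_softplus_sub_le_exp_mul (by nlinarith) (by nlinarith)

lemma norm_fderiv_comp_le_of_lipschitzOn {E : Type*} [NormedAddCommGroup E] [NormedSpace ℝ E]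
    {θ : ℝ → ℝ} {u : E → ℝ} {a δ K C : ℝ} {x : E} (hu : Continuous u) (hux : a < u x)
    (hu_lip : ∀ y z, |u y - u z| ≤ K * ‖y - z‖) (hδ : 0 ≤ δ)
    (hθ : ∀ s t, a < s → a < t → |θ s - θ t| ≤ δ * |s - t|) (hδK : δ * K ≤ C) (hC : 0 ≤ C) :
    ‖fderiv ℝ (θ ∘ u) x‖ ≤ C := by
  have hS : {y | a < u y} ∈ 𝓝 x := (isOpen_lt continuous_const hu).mem_nhds hux
  have hlip : LipschitzOnWith C.toNNReal (θ ∘ u) {y | a < u y} :=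
    LipschitzOnWith.of_dist_le_mul fun y hy z hz => by
      rw [Real.dist_eq, dist_eq_norm, Real.coe_toNNReal _ hC]
      calc |θ (u y) - θ (u z)| ≤ δ * |u y - u z| := hθ _ _ hy hz
        _ ≤ δ * (K * ‖y - z‖) := mul_le_mul_of_nonneg_left (hu_lip y z) hδ
        _ ≤ C * ‖y - z‖ := by rw [← mul_assoc]; gcongr
  simpa [Real.coe_toNNReal _ hC] using norm_fderiv_le_of_lipschitzOn ℝ hS hlip

lemma DenseRange.exists_sub_mem {ι E : Type*} [TopologicalSpace E] [AddGroup E] [ContinuousSub E]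
    {xs : ι → E} (hxs : DenseRange xs) {U : Set E} (hU : IsOpen U) (h0 : 0 ∈ U) (x : E) :
    ∃ i, x - xs i ∈ U :=
  hxs.exists_mem_open (hU.preimage (continuous_const.sub continuous_id)) ⟨x, by simpa using h0⟩

theorem exists_analytic_sup_partition_general
    {X : Type*} [NormedAddCommGroup X] [NormedSpace ℝ X]
    (n : ℕ) (hn : 1 ≤ n) (A : ℝ)
    (q : X → ℝ)
    (M : ContinuousMultilinearMap ℝ (fun _ : Fin (2 * n) => X) ℝ)
    (hq : ∀ x : X, q x = M (fun _ => x))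
    (hbound : ∀ x : X, ‖x‖ ^ (2 * n) ≤ q x ∧ q x ≤ A * ‖x‖ ^ (2 * n))
    (Q : X → ℝ) (hQ : ∀ x : X, Q x = (q x + 1) ^ ((1 : ℝ) / (2 * n)) - 1)
    (LQ : ℝ) (hLQ : ∀ x y : X, |Q x - Q y| ≤ LQ * ‖x - y‖)
    (xs : ℕ → X) (hxs : DenseRange xs) :
    ∃ L₁ : ℝ, 1 ≤ L₁ ∧
      ∀ r : ℝ, 0 < r → ∀ ε : ℝ, 0 < ε → ε < 1 →
        ∃ φ : ℕ → X → ℝ,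
          (∀ m : ℕ, IsRealAnalytic (φ m)) ∧
          (∀ m : ℕ, ContDiff ℝ 1 (φ m)) ∧
          -- (1) equi-Lipschitz with constant L₁·Lip(Q)/r
          (∀ m : ℕ, ∀ x y : X, |φ m x - φ m y| ≤ (L₁ * LQ / r) * ‖x - y‖) ∧
          -- (2) values in [0, 1+ε]
          (∀ m : ℕ, ∀ x : X, 0 ≤ φ m x ∧ φ m x ≤ 1 + ε) ∧
          -- (3) for each x some φ_m x > 1/2
          (∀ x : X, ∃ m : ℕ, 1 / 2 < φ m x) ∧
          -- (4) φ_m ≤ ε outside D_Q(x_m, 5r)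
          (∀ m : ℕ, ∀ x : X, ¬ Q (x - xs m) < 5 * r → φ m x ≤ ε) ∧
          -- (4′) ‖φ_m′‖ ≤ ε outside D_Q(x_m, 5r)
          (∀ m : ℕ, ∀ x : X, ¬ Q (x - xs m) < 5 * r → ‖fderiv ℝ (φ m) x‖ ≤ ε) := by
  have hq_nonneg : ∀ z, 0 ≤ q z := fun z => (pow_nonneg (norm_nonneg z) _).trans (hbound z).1
  have hQ_nonneg : ∀ z, 0 ≤ Q z := fun z => by
    rw [hQ, sub_nonneg]
    exact one_le_rpow (by linarith [hq_nonneg z]) (by positivity)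
  have hQ_zero : Q 0 = 0 := by
    have hq0 : q 0 = 0 := le_antisymm ((hbound 0).2.trans_eq (by simp; omega)) (hq_nonneg 0)
    rw [hQ, hq0, zero_add, one_rpow, sub_self]
  have hQ_an : AnalyticOnNhd ℝ Q Set.univ := fun z _ => by
    have hq1_an : AnalyticAt ℝ (fun z => q z + 1) z := by
      rw [funext hq]
      exact (M.analyticAt_diag z).add analyticAt_const
    rw [funext hQ]
    exact (hq1_an.rpow_const (by linarith [hq_nonneg z]) _).sub analyticAt_const
  refine ⟨1, le_rfl, fun r hr ε hε _ => ?_⟩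
  obtain ⟨θ, hθ_an, hθ_lip, hθ_range, hθ_half, hθ_tail, δ, hδ, hδC, hθ_tail_lip⟩ :=
    exists_analytic_profile hε (LQ / r)
  set u : ℕ → X → ℝ := fun m x => Q (x - xs m) / r
  have hu_lip : ∀ m x y, |u m x - u m y| ≤ LQ / r * ‖x - y‖ := fun m x y => by
    rw [← sub_div, abs_div, abs_of_pos hr, div_mul_eq_mul_div, div_le_div_iff_of_pos_right hr]
    simpa using hLQ (x - xs m) (y - xs m)
  have hφ_an : ∀ m, AnalyticOnNhd ℝ (θ ∘ u m) Set.univ := fun m x _ =>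
    (hθ_an _).comp ((hQ_an _ trivial).comp (analyticAt_id.sub analyticAt_const)).div_const
  refine ⟨fun m => θ ∘ u m, fun m => (hφ_an m).isRealAnalytic, fun m => (hφ_an m).contDiff,
    fun m x y => (hθ_lip _ _).trans ((hu_lip m x y).trans_eq (by ring)),
    fun m x => hθ_range _ (div_nonneg (hQ_nonneg _) hr.le), fun x => ?_,
    fun m x hx => hθ_tail _ ((le_div_iff₀ hr).2 (not_lt.1 hx)), fun m x hx => ?_⟩
  · obtain ⟨m, hm⟩ := hxs.exists_sub_mem (isOpen_lt hQ_an.continuous continuous_const)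
      (show Q 0 < r / 2 by linarith [hQ_zero]) x
    exact ⟨m, hθ_half _ ((div_lt_iff₀ hr).2 (by linarith [hm.out]))⟩
  · exact norm_fderiv_comp_le_of_lipschitzOn
      ((hQ_an.continuous.comp (continuous_id.sub continuous_const)).div_const r)
      ((lt_div_iff₀ hr).2 (by linarith [not_lt.1 hx])) (hu_lip m) hδ hθ_tail_lip hδC hε.le

/-- **Analytic sup-partitions.** Let `X` be a separable real Banach space, `q` a continuous
`2n`-homogeneous polynomial with `‖x‖^(2n) ≤ q x ≤ A‖x‖^(2n)`,
`Q x = (q x + 1)^(1/(2n)) - 1` with Lipschitz constant `LQ`, and `{x_m}` a dense sequence.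
Then there is `L₁ ≥ 1` such that for every `r > 0` and `ε ∈ (0,1)` there are real-analytic,
`C¹` functions `φ_m : X → ℝ` which are `L₁·LQ/r`-Lipschitz, take values in `[0, 1+ε]`,
satisfy: for each `x` some `φ_m x > 1/2`; and `φ_m x ≤ ε`, `‖φ_m′ x‖ ≤ ε` whenever
`x ∉ D_Q(x_m, 5r) = {y : Q (y - x_m) < 5r}`. -/
theorem exists_analytic_sup_partition
    {X : Type*} [NormedAddCommGroup X] [NormedSpace ℝ X] [CompleteSpace X]
    [TopologicalSpace.SeparableSpace X]
    (n : ℕ) (hn : 1 ≤ n) (A : ℝ) (hA : 1 < A)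
    (q : X → ℝ)
    (M : ContinuousMultilinearMap ℝ (fun _ : Fin (2 * n) => X) ℝ)
    (hq : ∀ x : X, q x = M (fun _ => x))
    (hbound : ∀ x : X, ‖x‖ ^ (2 * n) ≤ q x ∧ q x ≤ A * ‖x‖ ^ (2 * n))
    (Q : X → ℝ) (hQ : ∀ x : X, Q x = (q x + 1) ^ ((1 : ℝ) / (2 * n)) - 1)
    (LQ : ℝ) (hLQ : ∀ x y : X, |Q x - Q y| ≤ LQ * ‖x - y‖)
    (xs : ℕ → X) (hxs : DenseRange xs) :
    ∃ L₁ : ℝ, 1 ≤ L₁ ∧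
      ∀ r : ℝ, 0 < r → ∀ ε : ℝ, 0 < ε → ε < 1 →
        ∃ φ : ℕ → X → ℝ,
          (∀ m : ℕ, IsRealAnalytic (φ m)) ∧
          (∀ m : ℕ, ContDiff ℝ 1 (φ m)) ∧
          -- (1) equi-Lipschitz with constant L₁·Lip(Q)/r
          (∀ m : ℕ, ∀ x y : X, |φ m x - φ m y| ≤ (L₁ * LQ / r) * ‖x - y‖) ∧
          -- (2) values in [0, 1+ε]
          (∀ m : ℕ, ∀ x : X, 0 ≤ φ m x ∧ φ m x ≤ 1 + ε) ∧
          -- (3) for each x some φ_m x > 1/2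
          (∀ x : X, ∃ m : ℕ, 1 / 2 < φ m x) ∧
          -- (4) φ_m ≤ ε outside D_Q(x_m, 5r)
          (∀ m : ℕ, ∀ x : X, ¬ Q (x - xs m) < 5 * r → φ m x ≤ ε) ∧
          -- (4′) ‖φ_m′‖ ≤ ε outside D_Q(x_m, 5r)
          (∀ m : ℕ, ∀ x : X, ¬ Q (x - xs m) < 5 * r → ‖fderiv ℝ (φ m) x‖ ≤ ε) :=
  exists_analytic_sup_partition_general n hn A q M hq hbound Q hQ LQ hLQ xs hxs
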